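/- Let P ⊂ ℝⁿ be a compact convex body with nonempty interior containing 0 in its interior. Then the function W(a) = ∫_P exp(⟨a, x⟩) dx attains a minimum at a unique point a* ∈ ℝⁿ, and a* is the unique solution of ∫_P x·exp(⟨a, x⟩) dx = 0. -/

import Mathlib

/-!
The function `W a = ∫_P exp ⟪a, x⟫ dx` lies above each of its tangent planes,
`W b ≥ W a + ⟪b - a, ∇W a⟫` with `∇W a = ∫_P exp ⟪a, x⟫ x dx`, because `exp` lies above its
tangent lines; the gap vanishes only on the hyperplane `⟪b - a, x⟫ = 0`, a null set, so the
inequality is strict for `b ≠ a`. Hence a zero of `∇W` is the unique global minimiser of `W`.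
Conversely, applying the tangent inequality at `a - t ∇W a` and letting `t → 0⁺` shows that a
minimiser is a zero of `∇W`. A minimiser exists because `W` is continuous and, as a ball
around `0` lies in `P`, grows at least like `exp (r ‖a‖)`.
-/

open MeasureTheory Metric Filter Topology
open scoped RealInnerProductSpace

noncomputable section

variable {E : Type*} [NormedAddCommGroup E] [InnerProductSpace ℝ E]

theorem exp_inner_eq_exp_mul_exp_inner_sub (a b x : E) :
    Real.exp ⟪b, x⟫ = Real.exp ⟪a, x⟫ * Real.exp ⟪b - a, x⟫ := by
  rw [← Real.exp_add, inner_sub_left, add_sub_cancel]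

theorem exp_inner_mul_one_add_le (a b x : E) :
    Real.exp ⟪a, x⟫ * (1 + ⟪b - a, x⟫) ≤ Real.exp ⟪b, x⟫ := by
  rw [exp_inner_eq_exp_mul_exp_inner_sub a b x]
  gcongr
  linarith [Real.add_one_le_exp ⟪b - a, x⟫]

theorem exp_inner_mul_one_add_lt {a b x : E} (h : ⟪b - a, x⟫ ≠ 0) :
    Real.exp ⟪a, x⟫ * (1 + ⟪b - a, x⟫) < Real.exp ⟪b, x⟫ := by
  rw [exp_inner_eq_exp_mul_exp_inner_sub a b x]
  gcongr
  linarith [Real.add_one_lt_exp h]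

variable [MeasurableSpace E] {μ : Measure E} {P : Set E}

def expIntegral (μ : Measure E) (P : Set E) (a : E) : ℝ := ∫ x in P, Real.exp ⟪a, x⟫ ∂μ

def expMoment (μ : Measure E) (P : Set E) (a : E) : E := ∫ x in P, Real.exp ⟪a, x⟫ • x ∂μ

variable [FiniteDimensional ℝ E] [BorelSpace E]

section LocallyFinite

variable [IsLocallyFiniteMeasure μ]

theorem continuous_expIntegral (hP : IsCompact P) : Continuous (expIntegral μ P) :=
  continuous_parametric_integral_of_continuous (by fun_prop) hP

theorem continuous_expMoment (hP : IsCompact P) : Continuous (expMoment μ P) :=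
  continuous_parametric_integral_of_continuous (by fun_prop) hP

theorem inner_expMoment (hP : IsCompact P) (a v : E) :
    ⟪v, expMoment μ P a⟫ = ∫ x in P, Real.exp ⟪a, x⟫ * ⟪v, x⟫ ∂μ := by
  have hint : IntegrableOn (fun x => Real.exp ⟪a, x⟫ • x) P μ :=
    (by fun_prop : Continuous fun x : E => Real.exp ⟪a, x⟫ • x).continuousOn.integrableOn_compact hP
  simp_rw [expMoment, ← integral_inner hint, real_inner_smul_right]

theorem expIntegral_sub_tangent (hP : IsCompact P) (a b : E) :
    expIntegral μ P b - (expIntegral μ P a + ⟪b - a, expMoment μ P a⟫) =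
      ∫ x in P, (Real.exp ⟪b, x⟫ - Real.exp ⟪a, x⟫ * (1 + ⟪b - a, x⟫)) ∂μ := by
  have hint {f : E → ℝ} (hf : Continuous f) : IntegrableOn f P μ :=
    hf.continuousOn.integrableOn_compact hP
  simp_rw [inner_expMoment hP, expIntegral, mul_add, mul_one]
  rw [integral_sub (hint (by fun_prop)) (hint (by fun_prop)),
    integral_add (hint (by fun_prop)) (hint (by fun_prop))]

theorem expIntegral_add_inner_expMoment_le (hP : IsCompact P) (a b : E) :
    expIntegral μ P a + ⟪b - a, expMoment μ P a⟫ ≤ expIntegral μ P b := by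
  rw [← sub_nonneg, expIntegral_sub_tangent hP]
  exact setIntegral_nonneg_of_ae_restrict
    (ae_of_all _ fun x => sub_nonneg.2 (exp_inner_mul_one_add_le a b x))

theorem expMoment_eq_zero_of_forall_expIntegral_le (hP : IsCompact P) {a : E}
    (hmin : ∀ b, expIntegral μ P a ≤ expIntegral μ P b) : expMoment μ P a = 0 := by
  set m := expMoment μ P a
  have hlim : Tendsto (fun t : ℝ => ⟪m, expMoment μ P (a - t • m)⟫) (𝓝[>] 0) (𝓝 ⟪m, m⟫) := by
    have hM := continuous_expMoment (μ := μ) hP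
    have hcont : Continuous fun t : ℝ => ⟪m, expMoment μ P (a - t • m)⟫ := by fun_prop
    simpa [m] using (hcont.tendsto 0).mono_left nhdsWithin_le_nhds
  have hnonpos : ∀ t : ℝ, 0 < t → ⟪m, expMoment μ P (a - t • m)⟫ ≤ 0 := fun t ht => by
    have htan := expIntegral_add_inner_expMoment_le (μ := μ) hP (a - t • m) a
    rw [sub_sub_cancel, real_inner_smul_left] at htan
    nlinarith [hmin (a - t • m)]
  exact real_inner_self_nonpos.1 <|
    le_of_tendsto hlim (eventually_nhdsWithin_of_forall fun t ht => hnonpos t ht)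

end LocallyFinite

variable [μ.IsAddHaarMeasure]

theorem expIntegral_add_inner_expMoment_lt (hP : IsCompact P) (hPμ : μ P ≠ 0) {a b : E}
    (hab : a ≠ b) :
    expIntegral μ P a + ⟪b - a, expMoment μ P a⟫ < expIntegral μ P b := by
  set gap : E → ℝ := fun x => Real.exp ⟪b, x⟫ - Real.exp ⟪a, x⟫ * (1 + ⟪b - a, x⟫)
  have hgap : Continuous gap := by fun_prop
  rw [← sub_pos, expIntegral_sub_tangent hP, integral_pos_iff_support_of_nonneg_ae
    (ae_of_all _ fun x => sub_nonneg.2 (exp_inner_mul_one_add_le a b x))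
    (hgap.continuousOn.integrableOn_compact hP), Measure.restrict_apply' hP.measurableSet]
  set H : Submodule ℝ E := (ℝ ∙ (b - a))ᗮ with hHdef
  have hH : μ H = 0 := Measure.addHaar_submodule μ H <| by
    rw [hHdef, Ne, Submodule.orthogonal_eq_top_iff, Submodule.span_singleton_eq_bot, sub_eq_zero]
    exact hab.symm
  calc 0 < μ P := pos_iff_ne_zero.2 hPμ
    _ = μ (P \ H) := (measure_sdiff_null hH).symm
    _ ≤ μ (Function.support gap ∩ P) := measure_mono fun x ⟨hxP, hxH⟩ =>
        ⟨(sub_pos.2 <| exp_inner_mul_one_add_lt <|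
          mt Submodule.mem_orthogonal_singleton_iff_inner_right.2 hxH).ne', hxP⟩

theorem measureReal_ball_mul_exp_le_expIntegral (hP : IsCompact P) {r : ℝ} (hr : 0 < r)
    (hball : ball (0 : E) (3 * r) ⊆ P) (a : E) :
    μ.real (ball 0 r) * Real.exp (r * ‖a‖) ≤ expIntegral μ P a := by
  set c : E := (2 * r / ‖a‖) • a
  have hc : ⟪a, c⟫ = 2 * r * ‖a‖ ∧ ‖c‖ ≤ 2 * r := by
    rcases eq_or_ne ‖a‖ 0 with ha | ha
    · simp [c, norm_eq_zero.1 ha, hr.le]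
    · rw [real_inner_smul_right, real_inner_self_eq_norm_sq, norm_smul,
        Real.norm_of_nonneg (by positivity), div_mul_cancel₀ _ ha]
      exact ⟨by field_simp, le_rfl⟩
  have hcP : ball c r ⊆ P :=
    (ball_subset_ball' (by rw [dist_zero_right]; linarith [hc.2])).trans hball
  have hinner : ∀ x ∈ ball c r, r * ‖a‖ ≤ ⟪a, x⟫ := fun x hx => by
    have hcx := real_inner_le_norm a (c - x)
    rw [inner_sub_right, ← dist_eq_norm, dist_comm] at hcx
    nlinarith [mem_ball.1 hx, norm_nonneg a, hc.1]
  have hint : IntegrableOn (fun x => Real.exp ⟪a, x⟫) P μ :=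
    (by fun_prop : Continuous fun x : E => Real.exp ⟪a, x⟫).continuousOn.integrableOn_compact hP
  calc μ.real (ball 0 r) * Real.exp (r * ‖a‖) = Real.exp (r * ‖a‖) * μ.real (ball c r) := by
        rw [mul_comm, Measure.addHaar_real_ball_center μ c]
    _ ≤ ∫ x in ball c r, Real.exp ⟪a, x⟫ ∂μ :=
        setIntegral_ge_of_const_le_real measurableSet_ball measure_ball_lt_top.ne
          (fun x hx => Real.exp_le_exp.2 (hinner x hx)) (hint.mono_set hcP)
    _ ≤ expIntegral μ P a :=
        setIntegral_mono_set hint (ae_of_all _ fun x => (Real.exp_pos _).le) hcP.eventuallyLE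

theorem tendsto_expIntegral_cocompact (hP : IsCompact P) (h0 : (0 : E) ∈ interior P) :
    Tendsto (expIntegral μ P) (cocompact E) atTop := by
  obtain ⟨ε, hε, hball⟩ := Metric.mem_nhds_iff.1 (mem_interior_iff_mem_nhds.1 h0)
  have hr : 0 < ε / 3 := by positivity
  have hκ : 0 < μ.real (ball (0 : E) (ε / 3)) :=
    ENNReal.toReal_pos (measure_ball_pos μ 0 hr).ne' measure_ball_lt_top.ne
  refine tendsto_atTop_mono (measureReal_ball_mul_exp_le_expIntegral hP hr
    (by rwa [mul_div_cancel₀ _ three_ne_zero])) ?_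
  exact (Real.tendsto_exp_atTop.comp
    (tendsto_norm_cocompact_atTop.const_mul_atTop hr)).const_mul_atTop hκ

theorem expIntegral_lt_of_expMoment_eq_zero (hP : IsCompact P) (hPμ : μ P ≠ 0) {a b : E}
    (ha : expMoment μ P a = 0) (hab : a ≠ b) : expIntegral μ P a < expIntegral μ P b := by
  simpa [ha] using expIntegral_add_inner_expMoment_lt hP hPμ hab

theorem stmt_8_general (n : ℕ) (P : Set (EuclideanSpace ℝ (Fin n)))
    (hP : IsCompact P) (h0 : 0 ∈ interior P)
    (W : EuclideanSpace ℝ (Fin n) → ℝ)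
    (hW : ∀ a, W a = ∫ x in P, Real.exp ⟪a, x⟫) :
    ∃ a₀ : EuclideanSpace ℝ (Fin n),
      (∀ a, W a₀ ≤ W a) ∧
      (∀ a, (∀ b, W a ≤ W b) → a = a₀) ∧
      (∫ x in P, Real.exp ⟪a₀, x⟫ • x) = 0 ∧
      (∀ a, (∫ x in P, Real.exp ⟪a, x⟫ • x) = 0 → a = a₀) := by
  obtain rfl : W = expIntegral volume P := funext hW
  have hPμ : volume P ≠ 0 :=
    ((isOpen_interior.measure_pos volume ⟨0, h0⟩).trans_le (measure_mono interior_subset)).ne'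
  obtain ⟨a₀, hmin⟩ :=
    (continuous_expIntegral (μ := volume) hP).exists_forall_le (tendsto_expIntegral_cocompact hP h0)
  have hcrit : expMoment volume P a₀ = 0 := expMoment_eq_zero_of_forall_expIntegral_le hP hmin
  refine ⟨a₀, hmin, fun a ha => ?_, hcrit, fun a ha => ?_⟩
  · by_contra hne
    exact (expIntegral_lt_of_expMoment_eq_zero hP hPμ hcrit (Ne.symm hne)).not_ge (ha a₀)
  · by_contra hne
    exact (expIntegral_lt_of_expMoment_eq_zero hP hPμ ha hne).not_ge (hmin a)

theorem stmt_8 (n : ℕ) (P : Set (EuclideanSpace ℝ (Fin n)))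
    (hP : IsCompact P) (hconv : Convex ℝ P) (h0 : 0 ∈ interior P)
    (W : EuclideanSpace ℝ (Fin n) → ℝ)
    (hW : ∀ a, W a = ∫ x in P, Real.exp ⟪a, x⟫) :
    ∃ a₀ : EuclideanSpace ℝ (Fin n),
      (∀ a, W a₀ ≤ W a) ∧
      (∀ a, (∀ b, W a ≤ W b) → a = a₀) ∧
      (∫ x in P, Real.exp ⟪a₀, x⟫ • x) = 0 ∧
      (∀ a, (∫ x in P, Real.exp ⟪a, x⟫ • x) = 0 → a = a₀) :=
  stmt_8_general n P hP h0 W hW
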